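/- Let B be an integral domain of prime characteristic p with fraction field K, and let D be a derivation of K that is p-closed, i.e., D^p = h·D for some h ∈ K. Then for every a ∈ K the derivation aD is also p-closed: there exists g ∈ K with (aD)^p = g·(aD); explicitly, for a ≠ 0 one may take g = a^{p−1}·h + a^{−1}·(aD)^{p−1}(a). -/

import Mathlib

/-!
Hochschild's formula `(a • D)^p = a^p • D^p + ((a • D)^(p-1) a) • D` holds for every derivation `D`
of a commutative ring of characteristic `p`; dividing by `a` gives the claim.

Write `(a • D)^n = ∑ₖ cₙₖ • D^k`. In characteristic `p` the middle binomial coefficients of the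
Leibniz rule for `D^p` vanish, so `(a • D)^p` and `D^p` are derivations, and hence so is
`Δ = ∑_{2 ≤ k < p} c_pk • D^k`. After adjoining a variable `y` with `D y = 1`, the derivation `Δ`
kills `y` and therefore every `y^k`, whereas `D^j (y^k) = k!/(k-j)! • y^(k-j)`; by induction on `k`
this gives `k! • c_pk = 0`, and `k!` is a unit for `k < p`. The two remaining coefficients
`c_p1 = (a • D)^(p-1) a` and `c_pp = a^p` are read off from the recursion defining `cₙₖ`.
-/

open Polynomial Finset

namespace Derivation

variable {R S : Type*} [CommRing R] [CommRing S] [Algebra R S] (D : Derivation R S S)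

theorem iterate_map_mul (n : ℕ) (x y : S) :
    D^[n] (x * y) =
      ∑ ij ∈ antidiagonal n, (n.choose ij.1 : S) * (D^[ij.1] x * D^[ij.2] y) := by
  induction n with
  | zero => simp
  | succ n ih =>
    rw [sum_antidiagonal_choose_succ_mul (fun i j => D^[i] x * D^[j] y),
      Function.iterate_succ_apply', ih, map_sum, ← sum_add_distrib]
    refine sum_congr rfl fun ij hij => ?_
    rw [Nat.choose_symm_of_eq_add (HasAntidiagonal.mem_antidiagonal.1 hij).symm]
    simp only [leibniz, map_natCast, Function.iterate_succ_apply', smul_eq_mul]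
    ring

theorem iterate_pow_of_apply_eq_one {y : S} (hy : D y = 1) (j k : ℕ) :
    D^[j] (y ^ k) = (k.descFactorial j : S) * y ^ (k - j) := by
  induction j with
  | zero => simp
  | succ j ih =>
    rw [Function.iterate_succ_apply', ih, leibniz, leibniz_pow, map_natCast, hy,
      Nat.descFactorial_succ, Nat.sub_sub]
    simp only [smul_eq_mul, mul_one, mul_zero, add_zero, nsmul_eq_mul]
    push_cast
    ring

variable (a : S)

def smulIterateCoeff : ℕ → ℕ → S
  | 0, 0 => 1
  | 0, _ + 1 => 0
  | n + 1, 0 => a * D (smulIterateCoeff n 0)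
  | n + 1, k + 1 => a * D (smulIterateCoeff n (k + 1)) + a * smulIterateCoeff n k

theorem smulIterateCoeff_of_lt {n k : ℕ} (h : n < k) : D.smulIterateCoeff a n k = 0 := by
  induction n generalizing k with
  | zero => obtain ⟨k, rfl⟩ := Nat.exists_eq_add_of_lt h; rfl
  | succ n ih =>
    obtain ⟨k, rfl⟩ := Nat.exists_eq_add_of_lt (Nat.zero_lt_of_lt h)
    rw [smulIterateCoeff, ih (by omega), ih (by omega), map_zero]
    ring

theorem smulIterateCoeff_succ_zero (n : ℕ) : D.smulIterateCoeff a (n + 1) 0 = 0 := by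
  induction n with
  | zero => simp [smulIterateCoeff]
  | succ n ih => rw [smulIterateCoeff, ih, map_zero, mul_zero]

theorem smulIterateCoeff_self (n : ℕ) : D.smulIterateCoeff a n n = a ^ n := by
  induction n with
  | zero => simp [smulIterateCoeff]
  | succ n ih =>
    rw [smulIterateCoeff, smulIterateCoeff_of_lt D a n.lt_succ_self, ih, map_zero]
    ring

theorem smulIterateCoeff_succ_one (n : ℕ) :
    D.smulIterateCoeff a (n + 1) 1 = (a • D)^[n] a := by
  induction n with
  | zero => simp [smulIterateCoeff]
  | succ n ih =>
    rw [smulIterateCoeff, ih, smulIterateCoeff_succ_zero, Function.iterate_succ_apply']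
    simp

theorem iterate_smul_apply (n : ℕ) (x : S) :
    (a • D)^[n] x = ∑ k ∈ range (n + 1), D.smulIterateCoeff a n k * D^[k] x := by
  induction n with
  | zero => simp [smulIterateCoeff]
  | succ n ih =>
    set c := D.smulIterateCoeff a
    have hLHS : (a • D)^[n + 1] x = ∑ k ∈ range (n + 2), a * D (c n k) * D^[k] x +
        ∑ k ∈ range (n + 1), a * c n k * D^[k + 1] x := by
      rw [sum_range_succ _ (n + 1), show c n (n + 1) = 0 from smulIterateCoeff_of_lt D a
        n.lt_succ_self, map_zero, mul_zero, zero_mul, add_zero, ← sum_add_distrib,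
        Function.iterate_succ_apply', ih]
      simp only [smul_apply, map_sum, leibniz, smul_eq_mul, Function.iterate_succ_apply']
      exact sum_congr rfl fun k _ => by ring
    rw [hLHS, sum_range_succ' _ (n + 1), sum_range_succ' (fun k => c (n + 1) k * _)]
    simp only [c, smulIterateCoeff, add_mul, sum_add_distrib]
    ring

noncomputable def polynomialExtension : Derivation R S[X] S[X] :=
  PolynomialModule.equivPolynomialSelf.compDer D.mapCoeffs +
    (derivative' (R := S)).restrictScalars R

theorem polynomialExtension_C (c : S) : D.polynomialExtension (C c) = C (D c) := by
  simp [polynomialExtension]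

theorem polynomialExtension_X : D.polynomialExtension X = 1 := by
  simp [polynomialExtension]

theorem iterate_polynomialExtension_C (n : ℕ) (x : S) :
    D.polynomialExtension^[n] (C x) = C (D^[n] x) :=
  (Function.Semiconj.iterate_right (fun c => (D.polynomialExtension_C c).symm) n x).symm

theorem iterate_smul_polynomialExtension_C (n : ℕ) (x : S) :
    (C a • D.polynomialExtension)^[n] (C x) = C ((a • D)^[n] x) := by
  refine (Function.Semiconj.iterate_right (fun c => ?_) n x).symm
  simp [polynomialExtension_C]

section CharP

variable (p : ℕ) [hp : Fact p.Prime] [CharP S p]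

theorem iterate_prime_map_mul (x y : S) : D^[p] (x * y) = x * D^[p] y + D^[p] x * y := by
  rw [iterate_map_mul, sum_eq_add (0, p) (p, 0) (by simp [hp.out.ne_zero])]
  · simp
  · rintro ⟨i, j⟩ hij hne
    rw [HasAntidiagonal.mem_antidiagonal] at hij
    simp only [ne_eq, Prod.mk.injEq] at hne
    have hpi : p ∣ p.choose i := hp.out.dvd_choose_self (by omega) (by omega)
    rw [(CharP.cast_eq_zero_iff S p _).2 hpi, zero_mul]
  all_goals simp

def pIterate : Derivation R S S :=
  Derivation.mk' ((D : S →ₗ[R] S) ^ p) fun x y => by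
    simp only [Module.End.pow_apply, coeFn_coe, iterate_prime_map_mul, smul_eq_mul]
    ring

@[simp]
theorem coe_pIterate : ⇑(D.pIterate p) = D^[p] :=
  Module.End.coe_pow _ _

theorem eq_zero_of_apply_eq_sum_iterate {y : S} (hy : D y = 1) (Δ : Derivation R S S)
    (c : ℕ → S) {m : ℕ} (hm : m ≤ p) (hΔ : ∀ x, Δ x = ∑ k ∈ Ico 2 m, c k * D^[k] x) :
    ∀ k ∈ Ico 2 m, c k = 0 := by
  have hΔy : Δ y = 0 := by
    rw [hΔ]
    refine sum_eq_zero fun j hj => ?_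
    have := D.iterate_pow_of_apply_eq_one hy j 1
    rw [pow_one, Nat.descFactorial_of_lt (by have := mem_Ico.1 hj; omega)] at this
    simp [this]
  intro k
  induction k using Nat.strong_induction_on with
  | _ k ih =>
    intro hk
    have hunit : IsUnit (k.factorial : S) :=
      (IsUnit.natCast_factorial_iff_of_charP p).2 (by have := mem_Ico.1 hk; omega)
    have hΔpow : Δ (y ^ k) = (k.factorial : S) * c k := by
      rw [hΔ, sum_eq_single_of_mem k hk, D.iterate_pow_of_apply_eq_one hy,
        Nat.descFactorial_self, Nat.sub_self, pow_zero, mul_one, mul_comm]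
      intro j hj hjk
      rcases lt_or_gt_of_ne hjk with hjk | hjk
      · rw [ih j hjk hj, zero_mul]
      · rw [D.iterate_pow_of_apply_eq_one hy, Nat.descFactorial_of_lt hjk]
        simp
    rw [← hunit.mul_right_eq_zero, ← hΔpow, leibniz_pow, hΔy, smul_zero, smul_zero]

theorem iterate_smul_prime_of_apply_eq_one {y : S} (hy : D y = 1) (x : S) :
    (a • D)^[p] x = a ^ p * D^[p] x + (a • D)^[p - 1] a * D x := by
  obtain ⟨q, hq⟩ : ∃ q, p = q + 1 := ⟨p - 1, by have := hp.out.pos; omega⟩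
  have hc0 : D.smulIterateCoeff a p 0 = 0 := by rw [hq, smulIterateCoeff_succ_zero]
  have hc1 : D.smulIterateCoeff a p 1 = (a • D)^[p - 1] a := by
    rw [hq, smulIterateCoeff_succ_one, Nat.add_sub_cancel]
  have hsplit : ∀ x, (a • D)^[p] x = D.smulIterateCoeff a p 1 * D x +
      ∑ k ∈ Ico 2 p, D.smulIterateCoeff a p k * D^[k] x +
        D.smulIterateCoeff a p p * D^[p] x := by
    intro x
    have hp2 := hp.out.two_le
    rw [iterate_smul_apply, sum_range_succ, range_eq_Ico, sum_eq_sum_Ico_succ_bot (by omega),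
      sum_eq_sum_Ico_succ_bot (by omega), hc0, zero_mul, zero_add, Function.iterate_one,
      add_assoc]
  have hcp : D.smulIterateCoeff a p p = a ^ p := D.smulIterateCoeff_self a p
  set c := D.smulIterateCoeff a p
  let Δ := (a • D).pIterate p - c 1 • D - c p • D.pIterate p
  have hmid := D.eq_zero_of_apply_eq_sum_iterate p hy Δ c le_rfl fun x => by
    simp only [Δ, sub_apply, smul_apply, coe_pIterate, smul_eq_mul, hsplit x]
    ring
  rw [hsplit, sum_eq_zero fun k hk => by rw [hmid k hk, zero_mul], add_zero, hc1, hcp]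
  ring

theorem iterate_smul_prime (x : S) :
    (a • D)^[p] x = a ^ p * D^[p] x + (a • D)^[p - 1] a * D x := by
  have := D.polynomialExtension.iterate_smul_prime_of_apply_eq_one (C a) p
    D.polynomialExtension_X (C x)
  rw [iterate_smul_polynomialExtension_C, iterate_smul_polynomialExtension_C,
    iterate_polynomialExtension_C, polynomialExtension_C, ← C_pow, ← C_mul, ← C_mul,
    ← C_add] at this
  exact C_injective this

end CharP

end Derivation

theorem pClosed_smul_general {K : Type*} [Field K] (p : ℕ) (hp : p.Prime) [CharP K p]
    (D : K → K) (hadd : ∀ x y : K, D (x + y) = D x + D y)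
    (hleib : ∀ x y : K, D (x * y) = x * D y + D x * y)
    (h : K) (hD : ∀ x : K, D^[p] x = h * D x) (a : K) :
    (∃ g : K, ∀ x : K, (fun c => a * D c)^[p] x = g * (a * D x)) ∧
    (a ≠ 0 → ∀ x : K,
      (fun c => a * D c)^[p] x =
        (a ^ (p - 1) * h + a⁻¹ * ((fun c => a * D c)^[p - 1] a)) * (a * D x)) := by
  have : Fact p.Prime := ⟨hp⟩
  let D' : Derivation ℤ K K :=
    Derivation.mk' (AddMonoidHom.mk' D hadd).toIntLinearMap fun x y => by
      simp [hleib, mul_comm]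
  have hochschild (x : K) : (fun c => a * D c)^[p] x =
      a ^ p * (h * D x) + (fun c => a * D c)^[p - 1] a * D x := by
    rw [← hD]
    exact D'.iterate_smul_prime a p x
  have explicit (ha : a ≠ 0) (x : K) : (fun c => a * D c)^[p] x =
      (a ^ (p - 1) * h + a⁻¹ * ((fun c => a * D c)^[p - 1] a)) * (a * D x) := by
    rw [hochschild, ← pow_sub_one_mul hp.ne_zero]
    field_simp
  refine ⟨?_, explicit⟩
  rcases eq_or_ne a 0 with rfl | ha
  · refine ⟨0, fun x => ?_⟩
    obtain ⟨q, rfl⟩ := Nat.exists_eq_add_of_lt hp.pos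
    simp [Function.iterate_succ_apply']
  · exact ⟨_, explicit ha⟩

/-- If `B` is an integral domain of prime characteristic `p` with fraction field `K` and
`D` is a `p`-closed derivation of `K` (i.e. `D^p = h·D` for some `h ∈ K`), then for every
`a ∈ K` the derivation `a·D` is again `p`-closed, and for `a ≠ 0` one may take
`g = a^(p-1)·h + a⁻¹·(aD)^(p-1)(a)`. -/
theorem pClosed_smul {B K : Type*} [CommRing B] [IsDomain B] [Field K] [Algebra B K]
    [IsFractionRing B K] (p : ℕ) (hp : p.Prime) [CharP K p]
    (D : K → K) (hadd : ∀ x y : K, D (x + y) = D x + D y)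
    (hleib : ∀ x y : K, D (x * y) = x * D y + D x * y)
    (h : K) (hD : ∀ x : K, D^[p] x = h * D x) (a : K) :
    (∃ g : K, ∀ x : K, (fun c => a * D c)^[p] x = g * (a * D x)) ∧
    (a ≠ 0 → ∀ x : K,
      (fun c => a * D c)^[p] x =
        (a ^ (p - 1) * h + a⁻¹ * ((fun c => a * D c)^[p - 1] a)) * (a * D x)) :=
  pClosed_smul_general p hp D hadd hleib h hD a
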